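/- Let P be an ideal polygon partitioned along a diagonal into ideal polygons Q₁ and Q₂, with I+K nonzero for P, Q₁, Q₂. Then the hyperbolic barycenter S_P = ((I_P - K_P)/(I_P + K_P), 2J_P/(I_P + K_P)) is the convex-affine combination S_P = ((I_{Q₁}+K_{Q₁})/(I_P+K_P)) · S_{Q₁} + ((I_{Q₂}+K_{Q₂})/(I_P+K_P)) · S_{Q₂}. In particular, S_P, S_{Q₁}, S_{Q₂} are collinear. -/
import Mathlib


/-- The Hamiltonian `I` of the ideal `m`-gon with vertices `q 0, …, q (m-1)` (cyclic sum). -/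
noncomputable def hamI (m : ℕ) (q : ℕ → ℝ) : ℝ :=
  ∑ ℓ ∈ Finset.range m, 1 / (q ℓ - q ((ℓ + 1) % m))

/-- The Hamiltonian `J` of the ideal `m`-gon with vertices `q 0, …, q (m-1)` (cyclic sum). -/
noncomputable def hamJ (m : ℕ) (q : ℕ → ℝ) : ℝ :=
  (1 / 2) * ∑ ℓ ∈ Finset.range m, (q ℓ + q ((ℓ + 1) % m)) / (q ℓ - q ((ℓ + 1) % m))

/-- The Hamiltonian `K` of the ideal `m`-gon with vertices `q 0, …, q (m-1)` (cyclic sum). -/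
noncomputable def hamK (m : ℕ) (q : ℕ → ℝ) : ℝ :=
  ∑ ℓ ∈ Finset.range m, q ℓ * q ((ℓ + 1) % m) / (q ℓ - q ((ℓ + 1) % m))

/-- The hyperbolic barycenter `S = ((I-K)/(I+K), 2J/(I+K))` of an ideal `m`-gon. -/
noncomputable def bary (m : ℕ) (q : ℕ → ℝ) : ℝ × ℝ :=
  ((hamI m q - hamK m q) / (hamI m q + hamK m q), 2 * hamJ m q / (hamI m q + hamK m q))

lemma split_sum (s k : ℕ) (p q : ℕ → ℝ)
    (hq : ∀ i, q i = if i = 0 then p 0 else p (s + 1 + i))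
    (g : ℝ → ℝ → ℝ) (hg : ∀ x y, g x y = - g y x) :
    ∑ ℓ ∈ Finset.range (s + k + 4), g (p ℓ) (p ((ℓ + 1) % (s + k + 4)))
      = ∑ ℓ ∈ Finset.range (s + 3), g (p ℓ) (p ((ℓ + 1) % (s + 3)))
      + ∑ ℓ ∈ Finset.range (k + 3), g (q ℓ) (q ((ℓ + 1) % (k + 3))) := by
  have hP : ∑ ℓ ∈ Finset.range (s + k + 4), g (p ℓ) (p ((ℓ + 1) % (s + k + 4)))
      = (∑ ℓ ∈ Finset.range (s + 2), g (p ℓ) (p (ℓ + 1))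
        + ∑ j ∈ Finset.range (k + 1), g (p (s + 2 + j)) (p (s + 3 + j)))
        + g (p (s + k + 3)) (p 0) := by
    rw [show s + k + 4 = (s + k + 3) + 1 from rfl, Finset.sum_range_succ]
    congr 1
    · rw [show s + k + 3 = (s + 2) + (k + 1) by omega, Finset.sum_range_add]
      congr 1
      · apply Finset.sum_congr rfl
        intro i hi
        simp only [Finset.mem_range] at hi
        rw [Nat.mod_eq_of_lt (by omega)]
      · apply Finset.sum_congr rfl
        intro i hi
        simp only [Finset.mem_range] at hi
        rw [Nat.mod_eq_of_lt (by omega), show s + 2 + i + 1 = s + 3 + i by omega]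
    · rw [Nat.mod_self]
  have hQ1 : ∑ ℓ ∈ Finset.range (s + 3), g (p ℓ) (p ((ℓ + 1) % (s + 3)))
      = ∑ ℓ ∈ Finset.range (s + 2), g (p ℓ) (p (ℓ + 1)) + g (p (s + 2)) (p 0) := by
    rw [show s + 3 = (s + 2) + 1 from rfl, Finset.sum_range_succ, Nat.mod_self]
    congr 1
    apply Finset.sum_congr rfl
    intro i hi
    simp only [Finset.mem_range] at hi
    rw [Nat.mod_eq_of_lt (by omega)]
  have hQ2 : ∑ ℓ ∈ Finset.range (k + 3), g (q ℓ) (q ((ℓ + 1) % (k + 3)))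
      = (g (p 0) (p (s + 2))
        + ∑ j ∈ Finset.range (k + 1), g (p (s + 2 + j)) (p (s + 3 + j)))
        + g (p (s + k + 3)) (p 0) := by
    rw [show k + 3 = (k + 2) + 1 from rfl, Finset.sum_range_succ, Nat.mod_self]
    congr 1
    · have : ∀ ℓ ∈ Finset.range (k + 2),
          g (q ℓ) (q ((ℓ + 1) % (k + 3))) = g (q ℓ) (q (ℓ + 1)) := by
        intro i hi
        simp only [Finset.mem_range] at hi
        rw [Nat.mod_eq_of_lt (by omega)]
      rw [Finset.sum_congr rfl this,
        show k + 2 = 1 + (k + 1) by omega, Finset.sum_range_add]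
      congr 1
      · rw [Finset.sum_range_one, hq 0, hq 1, if_pos rfl, if_neg (by omega),
          show s + 1 + 1 = s + 2 by omega]
      · apply Finset.sum_congr rfl
        intro i hi
        simp only [Finset.mem_range] at hi
        rw [hq, hq, if_neg (by omega), if_neg (by omega),
          show s + 1 + (1 + i) = s + 2 + i by omega,
          show s + 1 + (1 + i + 1) = s + 3 + i by omega]
    · rw [hq, hq, if_pos rfl, if_neg (by omega),
        show s + 1 + (k + 2) = s + k + 3 by omega]
  rw [hP, hQ1, hQ2, hg (p 0) (p (s + 2))]
  ring

theorem stmt_6' (s k : ℕ) (p q : ℕ → ℝ)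
    (hq : ∀ i, q i = if i = 0 then p 0 else p (s + 1 + i))
    (hP : hamI (s + k + 4) p + hamK (s + k + 4) p ≠ 0)
    (hQ1 : hamI (s + 3) p + hamK (s + 3) p ≠ 0)
    (hQ2 : hamI (k + 3) q + hamK (k + 3) q ≠ 0) :
    bary (s + k + 4) p = ((hamI (s + 3) p + hamK (s + 3) p) / (hamI (s + k + 4) p + hamK (s + k + 4) p)) • bary (s + 3) p
        + ((hamI (k + 3) q + hamK (k + 3) q) / (hamI (s + k + 4) p + hamK (s + k + 4) p))
          • bary (k + 3) q ∧
    Collinear ℝ ({bary (s + k + 4) p, bary (s + 3) p, bary (k + 3) q} : Set (ℝ × ℝ)) := by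
  have hI : hamI (s + k + 4) p = hamI (s + 3) p + hamI (k + 3) q := by
    unfold hamI
    refine split_sum s k p q hq (fun x y => 1 / (x - y)) ?_
    intro x y
    show 1 / (x - y) = -(1 / (y - x))
    rw [show y - x = -(x - y) by ring, div_neg]; ring
  have hK : hamK (s + k + 4) p = hamK (s + 3) p + hamK (k + 3) q := by
    unfold hamK
    refine split_sum s k p q hq (fun x y => x * y / (x - y)) ?_
    intro x y
    show x * y / (x - y) = -(y * x / (y - x))
    rw [show y - x = -(x - y) by ring, div_neg]; ring
  have hJ : hamJ (s + k + 4) p = hamJ (s + 3) p + hamJ (k + 3) q := by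
    unfold hamJ
    rw [← mul_add]
    congr 1
    refine split_sum s k p q hq (fun x y => (x + y) / (x - y)) ?_
    intro x y
    show (x + y) / (x - y) = -((y + x) / (y - x))
    rw [show y - x = -(x - y) by ring, div_neg]; ring
  have hmain : bary (s + k + 4) p = ((hamI (s + 3) p + hamK (s + 3) p) / (hamI (s + k + 4) p + hamK (s + k + 4) p)) • bary (s + 3) p
      + ((hamI (k + 3) q + hamK (k + 3) q) / (hamI (s + k + 4) p + hamK (s + k + 4) p)) • bary (k + 3) q := by
    rw [Prod.ext_iff]
    unfold bary
    rw [hI, hK] at hP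
    rw [hI, hK, hJ]
    simp only [Prod.smul_mk, Prod.mk_add_mk, smul_eq_mul]
    constructor <;> field_simp <;> ring
  refine ⟨hmain, ?_⟩
  apply collinear_insert_of_mem_affineSpan_pair
  have hsum : (1 : ℝ) - (hamI (k + 3) q + hamK (k + 3) q) / (hamI (s + k + 4) p + hamK (s + k + 4) p)
      = (hamI (s + 3) p + hamK (s + 3) p) / (hamI (s + k + 4) p + hamK (s + k + 4) p) := by
    rw [eq_div_iff hP, sub_mul, div_mul_cancel₀ _ hP, hI, hK]
    ring
  rw [hmain]
  have := AffineMap.lineMap_mem_affineSpan_pair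
    ((hamI (k + 3) q + hamK (k + 3) q) / (hamI (s + k + 4) p + hamK (s + k + 4) p))
    (bary (s + 3) p) (bary (k + 3) q)
  rwa [AffineMap.lineMap_apply_module, hsum] at this

/-- Archimedean property: if the ideal `n`-gon `P` is partitioned along the diagonal
`p 0 – p (t-1)` into `Q₁ = (p 0, …, p (t-1))` and `Q₂ = (p 0, p (t-1), …, p (n-1))`, then
`S_P = ((I_{Q₁}+K_{Q₁})/(I_P+K_P)) • S_{Q₁} + ((I_{Q₂}+K_{Q₂})/(I_P+K_P)) • S_{Q₂}`;
in particular `S_P`, `S_{Q₁}`, `S_{Q₂}` are collinear. -/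
theorem stmt_6 (n t : ℕ) (ht : 3 ≤ t) (htn : t + 1 ≤ n) (p : ℕ → ℝ)
    (hdist : ∀ i < n, ∀ j < n, i ≠ j → p i ≠ p j)
    (q : ℕ → ℝ) (hq : q = fun i => if i = 0 then p 0 else p (t - 2 + i))
    (hP : hamI n p + hamK n p ≠ 0)
    (hQ1 : hamI t p + hamK t p ≠ 0)
    (hQ2 : hamI (n - t + 2) q + hamK (n - t + 2) q ≠ 0) :
    bary n p = ((hamI t p + hamK t p) / (hamI n p + hamK n p)) • bary t p
        + ((hamI (n - t + 2) q + hamK (n - t + 2) q) / (hamI n p + hamK n p))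
          • bary (n - t + 2) q ∧
    Collinear ℝ ({bary n p, bary t p, bary (n - t + 2) q} : Set (ℝ × ℝ)) := by
  obtain ⟨s, rfl⟩ : ∃ s, t = s + 3 := ⟨t - 3, by omega⟩
  obtain ⟨k, rfl⟩ : ∃ k, n = s + k + 4 := ⟨n - s - 4, by omega⟩
  have hm : s + k + 4 - (s + 3) + 2 = k + 3 := by omega
  rw [hm] at hQ2 ⊢
  have hq' : ∀ i, q i = if i = 0 then p 0 else p (s + 1 + i) := by
    intro i
    rw [hq]
    by_cases h : i = 0
    · simp [h]
    · simp only [h, if_false]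
      rw [show s + 3 - 2 + i = s + 1 + i by omega]
  exact stmt_6' s k p q hq' hP hQ1 hQ2
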